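/- Let $(G_n)_{n\geq 0}$ be a sequence of groups with associative unital homomorphisms $\oplus: G_m \times G_n \to G_{m+n}$ satisfying $(\dagger')$ (for every $n$ and $a \in G_n$ there exists $c \in G_{2n}'$ with $a \oplus e_n = (e_n \oplus a) c$). Then every commutator $[a,b]$ of elements $a, b$ in the colimit $G_\infty = \operatorname{colim}_n G_n$ is conjugate in $G_\infty$ to a commutator $[c,d]$ with $c, d$ in the commutator subgroup $G_\infty'$. -/

import Mathlib

/-- Iterated right stabilisation `G n → G k` (for `n ≤ k`) by the unit `e₁ ∈ G 1`. -/
def stabTo (G : ℕ → Type*) [∀ n, Group (G n)]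
    (op : ∀ m n, G m → G n → G (m + n)) {n k : ℕ} (h : n ≤ k) : G n → G k :=
  Nat.leRecOn h (fun {m} (a : G m) => op m 1 a 1)

open scoped commutatorElement

/-!
Lift `x, y` to a common level `N` as `a, b ∈ G N`. By `(†')`, `b ⊕ e_N = (e_N ⊕ b) c` with `c`
in the commutator subgroup, and in the colimit `a ⊕ e_N` and `b ⊕ e_N` still represent `x` and
`y`. Since `a ⊕ e_N` commutes with `e_N ⊕ b`, the commutator `⁅x, y⁆` is conjugate to `⁅x, γ⁆`
with `γ` the image of `c`. Applying this once more to `⁅γ, x⁆ = ⁅x, γ⁆⁻¹` replaces `x` by an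
element of the commutator subgroup as well.
-/

section GroupLemmas

variable {K : Type*} [Group K]

theorem commutatorElement_mul_right_of_commute {u w : K} (h : Commute u w) (γ : K) :
    ⁅u, w * γ⁆ = w * ⁅u, γ⁆ * w⁻¹ := by
  rw [commutatorElement_mul_right_eq_mul_conj, commutatorElement_eq_one_iff_commute.mpr h,
    one_mul]

theorem exists_conj_commutatorElement_mem_of_forall_conj_right (H : Subgroup K)
    (hH : ∀ x y : K, ∃ w, ∃ γ ∈ H, ⁅x, y⁆ = w * ⁅x, γ⁆ * w⁻¹) (x y : K) :
    ∃ v c d : K, c ∈ H ∧ d ∈ H ∧ ⁅x, y⁆ = v * ⁅c, d⁆ * v⁻¹ := by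
  obtain ⟨w₁, γ, hγ, hxy⟩ := hH x y
  obtain ⟨w₂, γ', hγ', hγx⟩ := hH γ x
  have hxγ : ⁅x, γ⁆ = w₂ * ⁅γ', γ⁆ * w₂⁻¹ := by
    rw [← commutatorElement_inv γ x, hγx, ← commutatorElement_inv γ γ']
    group
  refine ⟨w₁ * w₂, γ', γ, hγ', hγ, ?_⟩
  rw [hxy, hxγ]
  group

theorem MonoidHom.map_mem_commutator {K' : Type*} [Group K'] (f : K →* K') {c : K}
    (hc : c ∈ commutator K) : f c ∈ commutator K' := by
  have hmap : f c ∈ (commutator K).map f := Subgroup.mem_map_of_mem f hc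
  rw [map_commutator_eq] at hmap
  exact Subgroup.commutator_mono le_top le_top hmap

end GroupLemmas

section GradedPairing

variable {G : ℕ → Type*} [∀ n, Group (G n)] {op : ∀ m n, G m → G n → G (m + n)}

theorem op_one_one
    (hop : ∀ m n (a a' : G m) (b b' : G n), op m n (a * a') (b * b') = op m n a b * op m n a' b')
    (m n : ℕ) : op m n 1 1 = 1 := by
  have h := hop m n 1 1 1 1
  simp only [one_mul] at h
  exact left_eq_mul.mp h

theorem commute_op_one_right_op_one_left
    (hop : ∀ m n (a a' : G m) (b b' : G n), op m n (a * a') (b * b') = op m n a b * op m n a' b')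
    {m n : ℕ} (a : G m) (b : G n) : Commute (op m n a 1) (op m n 1 b) := by
  simp only [Commute, SemiconjBy, ← hop, mul_one, one_mul]

variable {Ginf : Type*} [Group Ginf] {ι : ∀ n, G n →* Ginf}

theorem map_cast_congrArg {p q : ℕ} (h : p = q) (a : G p) :
    ι q (cast (congrArg G h) a) = ι p a := by
  subst h
  rfl

theorem map_op_one_right
    (hop : ∀ m n (a a' : G m) (b b' : G n), op m n (a * a') (b * b') = op m n a b * op m n a' b')
    (hassoc : ∀ m n k (a : G m) (b : G n) (c : G k),
      op (m + n) k (op m n a b) c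
        = cast (congrArg G (Nat.add_assoc m n k).symm) (op m (n + k) a (op n k b c)))
    (hunit_right : ∀ m (a : G m), op m 0 a 1 = a)
    (hcompat : ∀ n (a : G n), ι (n + 1) (op n 1 a 1) = ι n a)
    (k n : ℕ) (a : G n) : ι (n + k) (op n k a 1) = ι n a := by
  induction k with
  | zero => rw [hunit_right]; rfl
  | succ k ih =>
    have hstep : op (n + k) 1 (op n k a 1) 1 = cast (congrArg G (Nat.add_assoc n k 1).symm)
        (op n (k + 1) a 1) := by
      rw [hassoc, op_one_one hop]
    calc ι (n + (k + 1)) (op n (k + 1) a 1)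
        = ι (n + k + 1) (op (n + k) 1 (op n k a 1) 1) := by
          rw [hstep, map_cast_congrArg (Nat.add_assoc n k 1).symm]
      _ = ι n a := by rw [hcompat, ih]

theorem exists_common_level
    (hstab : ∀ k n (a : G n), ι (n + k) (op n k a 1) = ι n a)
    (hsurj : ∀ g : Ginf, ∃ n a, ι n a = g) (x y : Ginf) :
    ∃ N, ∃ a b : G N, ι N a = x ∧ ι N b = y := by
  obtain ⟨n, a, rfl⟩ := hsurj x
  obtain ⟨m, b, rfl⟩ := hsurj y
  refine ⟨n + m, op n m a 1, cast (congrArg G (Nat.add_comm m n)) (op m n b 1), hstab m n a, ?_⟩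
  rw [map_cast_congrArg (Nat.add_comm m n), hstab]

theorem exists_conj_commutatorElement_right_mem_commutator
    (hop : ∀ m n (a a' : G m) (b b' : G n), op m n (a * a') (b * b') = op m n a b * op m n a' b')
    (hdagger : ∀ n (a : G n), ∃ c ∈ commutator (G (n + n)), op n n a 1 = op n n 1 a * c)
    (hstab : ∀ k n (a : G n), ι (n + k) (op n k a 1) = ι n a)
    (hsurj : ∀ g : Ginf, ∃ n a, ι n a = g) (x y : Ginf) :
    ∃ w, ∃ γ ∈ commutator Ginf, ⁅x, y⁆ = w * ⁅x, γ⁆ * w⁻¹ := by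
  obtain ⟨N, a, b, rfl, rfl⟩ := exists_common_level hstab hsurj x y
  obtain ⟨c, hc, hbc⟩ := hdagger N b
  refine ⟨ι (N + N) (op N N 1 b), ι (N + N) c, (ι (N + N)).map_mem_commutator hc, ?_⟩
  have hcomm := (commute_op_one_right_op_one_left hop a b).map (ι (N + N))
  rw [← hstab N N a, ← hstab N N b, hbc, map_mul]
  exact commutatorElement_mul_right_of_commute hcomm _

end GradedPairing

theorem commutator_conjugate_in_colimit_general
    (G : ℕ → Type*) [∀ n, Group (G n)]
    (op : ∀ m n, G m → G n → G (m + n))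
    (hop : ∀ m n (a a' : G m) (b b' : G n),
      op m n (a * a') (b * b') = op m n a b * op m n a' b')
    (hassoc : ∀ m n k (a : G m) (b : G n) (c : G k),
      op (m + n) k (op m n a b) c
        = cast (congrArg G (Nat.add_assoc m n k).symm) (op m (n + k) a (op n k b c)))
    (hunit_right : ∀ m (a : G m), op m 0 a 1 = a)
    (hdagger : ∀ n (a : G n), ∃ c ∈ commutator (G (n + n)),
      op n n a 1 = op n n 1 a * c)
    (Ginf : Type*) [Group Ginf] (ι : ∀ n, G n →* Ginf)
    (hcompat : ∀ n (a : G n), ι (n + 1) (op n 1 a 1) = ι n a)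
    (hsurj : ∀ g : Ginf, ∃ n a, ι n a = g) :
    ∀ x y : Ginf, ∃ v c d : Ginf, c ∈ commutator Ginf ∧ d ∈ commutator Ginf ∧
      ⁅x, y⁆ = v * ⁅c, d⁆ * v⁻¹ :=
  exists_conj_commutatorElement_mem_of_forall_conj_right _
    (exists_conj_commutatorElement_right_mem_commutator hop hdagger
      (map_op_one_right hop hassoc hunit_right hcompat) hsurj)

/-- Let `(G n)` be a sequence of groups with associative, unital homomorphic pairings
`⊕ : G m × G n → G (m+n)` satisfying condition `(†')`: for every `n` and `a ∈ G n`
there is `c ∈ G_{2n}'` with `a ⊕ e_n = (e_n ⊕ a) c`.  Let `Ginf` be the colimit of the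
system `-⊕e₁ : G n → G (n+1)` (with structure maps `ι n : G n → Ginf`, which are
compatible, jointly surjective, and identify exactly eventually-equal elements).
Then every commutator `⁅x,y⁆` in `Ginf` is conjugate to a commutator `⁅c,d⁆` with `c, d` in the commutator subgroup of `Ginf`. -/
theorem commutator_conjugate_in_colimit
    (G : ℕ → Type*) [∀ n, Group (G n)]
    (op : ∀ m n, G m → G n → G (m + n))
    (hop : ∀ m n (a a' : G m) (b b' : G n),
      op m n (a * a') (b * b') = op m n a b * op m n a' b')
    (hassoc : ∀ m n k (a : G m) (b : G n) (c : G k),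
      op (m + n) k (op m n a b) c
        = cast (congrArg G (Nat.add_assoc m n k).symm) (op m (n + k) a (op n k b c)))
    (hunit_left : ∀ n (a : G n), op 0 n 1 a = cast (congrArg G (Nat.zero_add n).symm) a)
    (hunit_right : ∀ m (a : G m), op m 0 a 1 = a)
    (hdagger : ∀ n (a : G n), ∃ c ∈ commutator (G (n + n)),
      op n n a 1 = op n n 1 a * c)
    (Ginf : Type*) [Group Ginf] (ι : ∀ n, G n →* Ginf)
    (hcompat : ∀ n (a : G n), ι (n + 1) (op n 1 a 1) = ι n a)
    (hsurj : ∀ g : Ginf, ∃ n a, ι n a = g)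
    (hinj : ∀ n (a b : G n), ι n a = ι n b →
      ∃ k, ∃ h : n ≤ k, stabTo G op h a = stabTo G op h b) :
    ∀ x y : Ginf, ∃ v c d : Ginf, c ∈ commutator Ginf ∧ d ∈ commutator Ginf ∧
      ⁅x, y⁆ = v * ⁅c, d⁆ * v⁻¹ :=
  commutator_conjugate_in_colimit_general G op hop hassoc hunit_right hdagger Ginf ι hcompat hsurj
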